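/- arXiv:1311.4309 — 7 statements merged into one kernel-verified Lean document; each statement's English description precedes it below -/
import Mathlib

section
/- Let a, b ∈ L* with [F(ab^{-1}) : F] = 2, where L = F_{q^n} and F = F_q. Write ω = ab^{-1}, with minimal polynomial ω² = αω + β over F (α, β ∈ F). Then for all t, u ∈ F not both zero, F((t + uω)^{-1}) = F(t + αu − uω). In particular, the restriction of the inversion map j to the projective line spanned by Fa and Fb is induced by an F-linear map, hence is a projectivity onto the line spanned by F(a^{-1}) and F(b^{-1}). -/
set_option synthInstance.maxHeartbeats 400000 in
/-- If `a, b ∈ L*` and `[F(ab⁻¹) : F] = 2`, with `ω = ab⁻¹` satisfying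
`ω² = αω + β` (`α, β ∈ F`), then for all `t, u ∈ F` not both zero,
`F((t + uω)⁻¹) = F(t + αu − uω)`.  In particular, the restriction of the
inversion `j` to the line through `Fa` and `Fb` is induced by an `F`-linear
map, hence is a projectivity onto the line through `F(a⁻¹)` and `F(b⁻¹)`. -/
theorem stmt2 (q n : ℕ) (hq : IsPrimePow q) (hn : 2 ≤ n)
    (L : Type*) [Field L] [Fintype L] (F : Subfield L)
    (hL : Nat.card L = q ^ n) (hF : Nat.card F = q)
    (a b : L) (ha : a ≠ 0) (hb : b ≠ 0)
    (ω : L) (hω : ω = a * b⁻¹)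
    (hdeg : Module.finrank F (IntermediateField.adjoin F {ω}) = 2)
    (α β : F) (hmin : ω ^ 2 = (α : L) * ω + (β : L)) :
    ∀ t u : F, ¬(t = 0 ∧ u = 0) →
      Submodule.span F {((t : L) + (u : L) * ω)⁻¹}
        = Submodule.span F {(t : L) + (α : L) * (u : L) - (u : L) * ω} := by
  -- ω ∉ F
  have hωF : ∀ c : F, ω ≠ (c : L) := by
    intro c hc
    have hbot : IntermediateField.adjoin F {ω} = ⊥ := by
      rw [IntermediateField.adjoin_simple_eq_bot_iff, hc]
      exact IntermediateField.algebraMap_mem ⊥ c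
    rw [hbot, IntermediateField.finrank_bot] at hdeg
    omega
  intro t u htu
  have hx : (t : L) + (u : L) * ω ≠ 0 := by
    intro h
    rcases eq_or_ne u 0 with hu | hu
    · apply htu
      refine ⟨?_, hu⟩
      have : (t : L) = 0 := by
        simpa [hu] using h
      exact_mod_cast Subtype.ext this
    · apply hωF (-(t * u⁻¹))
      have hu' : (u : L) ≠ 0 := by exact_mod_cast fun h => hu (Subtype.ext h)
      push_cast
      field_simp
      linear_combination h
  have hy : (t : L) + (α : L) * (u : L) - (u : L) * ω ≠ 0 := by
    intro h
    rcases eq_or_ne u 0 with hu | hu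
    · apply htu
      refine ⟨?_, hu⟩
      have : (t : L) = 0 := by
        simpa [hu] using h
      exact_mod_cast Subtype.ext this
    · apply hωF ((t + α * u) * u⁻¹)
      have hu' : (u : L) ≠ 0 := by exact_mod_cast fun h => hu (Subtype.ext h)
      push_cast
      field_simp
      linear_combination -h
  -- the product is the norm, an element of F
  set c : F := t ^ 2 + α * t * u - β * u ^ 2 with hc
  have hprod : ((t : L) + (u : L) * ω) * ((t : L) + (α : L) * (u : L) - (u : L) * ω)
      = (c : L) := by
    push_cast [hc]
    linear_combination (-(u : L) ^ 2) * hmin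
  have hcne : (c : L) ≠ 0 := by
    rw [← hprod]
    exact mul_ne_zero hx hy
  have hcF : c ≠ 0 := fun h => hcne (by exact_mod_cast congrArg (Subtype.val) h)
  have hinv : ((t : L) + (u : L) * ω)⁻¹
      = (c⁻¹ : F) • ((t : L) + (α : L) * (u : L) - (u : L) * ω) := by
    have hsm : (c⁻¹ : F) • ((t : L) + (α : L) * (u : L) - (u : L) * ω)
        = ((c : L))⁻¹ * ((t : L) + (α : L) * (u : L) - (u : L) * ω) := by
      simp [Subfield.smul_def]
    rw [hsm]
    field_simp
    linear_combination (-1 : L) * hprod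
  rw [hinv, Submodule.span_singleton_smul_eq]
  exact (isUnit_iff_ne_zero.mpr (inv_ne_zero hcF))
end

section
/- Let n be even, L = F_{q^n}, C = F_{q^2} ⊆ L. There exists x ∈ L \ C with x² ∈ C if and only if q is odd and n ≡ 0 (mod 4). -/
open Polynomial

/-- Membership in a subfield of cardinality `m` is characterized by `y ^ m = y`. -/
lemma subfield_mem_iff_pow {m : ℕ} (hm : 1 < m) (L : Type*) [Field L] [Fintype L]
    (C : Subfield L) (hC : Nat.card C = m) : ∀ y : L, y ∈ C ↔ y ^ m = y := by
  classical
  haveI : Fintype C := Fintype.ofFinite C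
  have hcard : Fintype.card C = m := by rw [← Nat.card_eq_fintype_card, hC]
  have hpow : ∀ y ∈ C, y ^ m = y := by
    intro y hy
    have h := FiniteField.pow_card (⟨y, hy⟩ : C)
    rw [hcard] at h
    simpa using congrArg Subtype.val h
  intro y
  refine ⟨hpow y, fun hy => ?_⟩
  -- roots of X^m - X
  set P : L[X] := X ^ m - X with hP
  have hPne : P ≠ 0 := by
    intro h
    have := congrArg (fun p => Polynomial.coeff p m) h
    simp [hP, Polynomial.coeff_X, hm.ne] at this
  have hPdeg : P.natDegree = m := by
    rw [hP]
    rw [Polynomial.natDegree_sub_eq_left_of_natDegree_lt]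
    · exact Polynomial.natDegree_X_pow m
    · simpa [Polynomial.natDegree_X_pow] using hm
  have hroots : P.roots.toFinset.card ≤ m := by
    calc P.roots.toFinset.card ≤ Multiset.card P.roots := P.roots.toFinset_card_le
    _ ≤ P.natDegree := P.card_roots'
    _ = m := hPdeg
  have hmemroot : ∀ z : L, z ^ m = z → z ∈ P.roots.toFinset := by
    intro z hz
    rw [Multiset.mem_toFinset, Polynomial.mem_roots hPne]
    simp [hP, hz]
  -- build injection from C into the roots
  let f : C → P.roots.toFinset := fun c => ⟨(c : L), hmemroot c (hpow c c.2)⟩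
  have hf : Function.Injective f := by
    intro a b hab
    have h1 := congrArg (Subtype.val : P.roots.toFinset → L) hab
    exact Subtype.ext h1
  have hcardle : m ≤ Fintype.card P.roots.toFinset := by
    rw [← hcard]
    exact Fintype.card_le_of_injective f hf
  have hT : Fintype.card P.roots.toFinset = P.roots.toFinset.card := Fintype.card_coe _
  have hcards : Fintype.card C = Fintype.card P.roots.toFinset :=
    le_antisymm (Fintype.card_le_of_injective f hf) (by rw [hT, hcard]; exact hroots)
  have hbij : Function.Bijective f :=
    (Fintype.bijective_iff_injective_and_card f).mpr ⟨hf, hcards⟩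
  obtain ⟨c, hc⟩ := hbij.2 ⟨y, hmemroot y hy⟩
  have hcy : (c : L) = y := by simpa [f] using congrArg Subtype.val hc
  rw [← hcy]
  exact c.2

/-- There exists `x ∈ L \ C` with `x² ∈ C` if and only if `q` is odd
and `n ≡ 0 (mod 4)`. -/
theorem stmt5 (q n : ℕ) (hq : IsPrimePow q) (hn : 2 ≤ n) (hneven : Even n)
    (L : Type*) [Field L] [Fintype L] (F C : Subfield L) (hFC : F ≤ C)
    (hL : Nat.card L = q ^ n) (hF : Nat.card F = q) (hC : Nat.card C = q ^ 2) :
    (∃ x : L, x ∉ C ∧ x ^ 2 ∈ C) ↔ (Odd q ∧ 4 ∣ n) := by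
  obtain ⟨r, k, hr, hk, hrk⟩ := hq
  have hrprime : r.Prime := hr.nat_prime
  have hq1 : 1 < q := by
    rw [← hrk]; exact Nat.one_lt_pow hk.ne' hrprime.one_lt
  have hq21 : 1 < q ^ 2 := Nat.one_lt_pow (by norm_num) hq1
  have hiff : ∀ y : L, y ∈ C ↔ y ^ (q ^ 2) = y := subfield_mem_iff_pow hq21 L C hC
  have hcardL : Fintype.card L = q ^ n := by rw [← Nat.card_eq_fintype_card, hL]
  constructor
  · rintro ⟨x, hxC, hx2⟩
    have hx0 : x ≠ 0 := fun h => hxC (h ▸ C.zero_mem)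
    have h1 : (x ^ q ^ 2) ^ 2 = x ^ 2 := by
      rw [← pow_mul, mul_comm, pow_mul]
      exact (hiff _).mp hx2
    have h2 : (x ^ q ^ 2 - x) * (x ^ q ^ 2 + x) = 0 := by linear_combination h1
    have hneg : x ^ q ^ 2 = -x := by
      rcases mul_eq_zero.mp h2 with h | h
      · exact absurd ((hiff x).mpr (sub_eq_zero.mp h)) hxC
      · exact eq_neg_of_add_eq_zero_left h
    have hnx : -x ≠ x := by
      intro h
      exact hxC ((hiff x).mpr (hneg.trans h))
    have hne11 : (-1 : L) ≠ 1 := by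
      intro h
      apply hnx
      calc -x = (-1 : L) * x := by ring
      _ = 1 * x := by rw [h]
      _ = x := one_mul x
    -- q is odd
    have hchar : ringChar L = r := by
      haveI : CharP L (ringChar L) := ringChar.charP L
      obtain ⟨m, hpm, hcard⟩ := FiniteField.card L (ringChar L)
      have : r ∣ (ringChar L) ^ (m : ℕ) := by
        rw [← hcard, hcardL, ← hrk, ← pow_mul]
        exact dvd_pow_self r (by positivity)
      have := hrprime.dvd_of_dvd_pow this
      exact ((Nat.prime_dvd_prime_iff_eq hrprime hpm).mp this).symm
    have hr2 : r ≠ 2 := by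
      intro h
      haveI : CharP L 2 := by rw [← h, ← hchar]; exact ringChar.charP L
      exact hne11 (CharTwo.neg_eq 1)
    have hrodd : Odd r := hrprime.odd_of_ne_two hr2
    have hqodd : Odd q := by rw [← hrk]; exact hrodd.pow
    refine ⟨hqodd, ?_⟩
    -- iterate Frobenius
    have hq2odd : Odd (q ^ 2) := hqodd.pow
    have hiter : ∀ j : ℕ, x ^ (q ^ 2) ^ j = (-1) ^ j * x := by
      intro j
      induction j with
      | zero => simp
      | succ j ih =>
        calc x ^ (q ^ 2) ^ (j + 1) = (x ^ (q ^ 2) ^ j) ^ (q ^ 2) := by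
              rw [pow_succ (q ^ 2) j, pow_mul]
        _ = ((-1) ^ j * x) ^ (q ^ 2) := by rw [ih]
        _ = ((-1) ^ (q ^ 2)) ^ j * x ^ (q ^ 2) := by
              rw [mul_pow, ← pow_mul, mul_comm j (q ^ 2), pow_mul]
        _ = (-1) ^ (j + 1) * x := by rw [hq2odd.neg_one_pow, hneg]; ring
    obtain ⟨m, hm⟩ := hneven
    have hnm : n = 2 * m := by omega
    have hxn : x ^ q ^ n = x := by
      have := FiniteField.pow_card x
      rwa [hcardL] at this
    have hqm : (q ^ 2) ^ m = q ^ n := by rw [← pow_mul, hnm]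
    have key : (-1 : L) ^ m * x = x := by rw [← hiter m, hqm, hxn]
    have hm1 : (-1 : L) ^ m = 1 := by
      apply mul_right_cancel₀ hx0
      rw [key, one_mul]
    have hmeven : Even m := by
      by_contra hodd
      rw [Nat.not_even_iff_odd] at hodd
      rw [hodd.neg_one_pow] at hm1
      exact hne11 hm1
    obtain ⟨t, ht⟩ := hmeven
    exact ⟨t, by omega⟩
  · rintro ⟨hqodd, t, ht⟩
    -- construct an element of order 2*(q^2-1) in Lˣ
    obtain ⟨g, hg⟩ := IsCyclic.exists_ofOrder_eq_natCard (α := Lˣ)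
    have hcardU : Nat.card Lˣ = q ^ n - 1 := by rw [Nat.card_units, hL]
    set N := q ^ n - 1 with hN
    set a := q ^ 2 - 1 with ha
    have ha0 : 0 < a := by omega
    have hDdvd : 2 * a ∣ N := by
      have hq2a : q ^ 2 = a + 1 := by omega
      have h1 : 2 * a ∣ q ^ 4 - 1 := by
        have hfac : q ^ 4 - 1 = a * (q ^ 2 + 1) := by
          have h4 : q ^ 4 = (a + 1) * (a + 1) := by rw [← hq2a]; ring
          have h5 : q ^ 2 + 1 = a + 2 := by omega
          have h6 : (a + 1) * (a + 1) = a * (a + 2) + 1 := by ring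
          rw [h4, h5]
          omega
        obtain ⟨s2, hs2⟩ : 2 ∣ q ^ 2 + 1 := by
          obtain ⟨s, hs⟩ := hqodd
          have : q ^ 2 = 4 * s ^ 2 + 4 * s + 1 := by rw [hs]; ring
          omega
        rw [hfac, hs2]
        exact ⟨s2, by ring⟩
      have h2 : q ^ 4 - 1 ∣ N := by
        have := Nat.sub_dvd_pow_sub_pow (q ^ 4) 1 t
        rwa [one_pow, ← pow_mul, ← ht, ← hN] at this
      exact h1.trans h2
    have hN0 : 0 < N := by
      have h2q : 2 ≤ q ^ n := by
        calc 2 ≤ q := hq1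
        _ ≤ q ^ n := Nat.le_self_pow (by omega) q
      rw [hN]
      omega
    set u : Lˣ := g ^ (N / (2 * a)) with hu
    have hdiv : N / (2 * a) ∣ N := Nat.div_dvd_of_dvd hDdvd
    have hordu : orderOf u = 2 * a := by
      rw [hu, orderOf_pow, hg, hcardU, Nat.gcd_eq_right hdiv,
        Nat.div_div_self hDdvd (by omega)]
    refine ⟨(u : L), ?_, ?_⟩
    · intro hmem
      have hx := (hiff _).mp hmem
      have hxu : u ^ (q ^ 2) = u := Units.ext (by push_cast; exact hx)
      have hq2a : q ^ 2 = a + 1 := by omega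
      have h' : u ^ (a + 1) = u := by rw [← hq2a]; exact hxu
      rw [pow_succ] at h'
      have h'' : u ^ a * u = 1 * u := by rw [one_mul]; exact h'
      have hua : u ^ a = 1 := mul_right_cancel h''
      have hdvd := orderOf_dvd_of_pow_eq_one hua
      rw [hordu] at hdvd
      have := Nat.le_of_dvd ha0 hdvd
      omega
    · rw [hiff]
      have h2a : orderOf (u ^ 2) = a := by
        rw [orderOf_pow, hordu]
        have hgcd : Nat.gcd (2 * a) 2 = 2 := Nat.gcd_eq_right ⟨a, rfl⟩
        rw [hgcd, Nat.mul_div_cancel_left a (by norm_num)]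
      have hpow1 : (u ^ 2) ^ a = 1 := by rw [← h2a]; exact pow_orderOf_eq_one _
      have hq2a : q ^ 2 = a + 1 := by omega
      have hstep : (u ^ 2) ^ (q ^ 2) = u ^ 2 := by
        rw [hq2a, pow_succ, hpow1, one_mul]
      calc ((u : L) ^ 2) ^ (q ^ 2) = (((u ^ 2) ^ (q ^ 2) : Lˣ) : L) := by push_cast; ring
      _ = ((u ^ 2 : Lˣ) : L) := by rw [hstep]
      _ = (u : L) ^ 2 := by push_cast; ring
end

section
/- Let n be even, L = F_{q^n}, C = F_{q^2}, F = F_q. The number of lines of the Desarguesian spread D = {Cx : x ∈ L*} fixed by the inversion j is exactly 2 if q is odd and 4 | n, and exactly 1 otherwise. -/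
/-!
The line `C x` is fixed by `j` iff `x ^ 2 ∈ C`, so the fixed lines are the elements of order
at most `2` in the cyclic group `Lˣ ⧸ Cˣ`. That group has order
`M = (q ^ n - 1) / (q ^ 2 - 1) = ∑_{i < n/2} q ^ (2 i)`, hence exactly `gcd M 2` such elements,
and this sum of `n / 2` terms is even iff `q` is odd and `n / 2` is even.
-/

open Submodule Finset

theorem IsCyclic.ncard_pow_eq_one (G : Type*) [CommGroup G] [IsCyclic G] [Finite G] (d : ℕ) :
    {y : G | y ^ d = 1}.ncard = (Nat.card G).gcd d := by
  rw [← IsCyclic.card_powMonoidHom_ker, ← Nat.card_coe_set_eq]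
  rfl

theorem Nat.two_dvd_geom_sum_iff {m k : ℕ} (hk : k ≠ 0) :
    2 ∣ ∑ i ∈ range k, m ^ i ↔ Odd m ∧ 2 ∣ k := by
  rw [← ZMod.natCast_eq_zero_iff, ← ZMod.natCast_eq_zero_iff k]
  push_cast
  rcases Nat.even_or_odd m with hm | hm
  · rw [(ZMod.natCast_eq_zero_iff_even).2 hm, zero_geom_sum, if_neg hk]
    simp [Nat.not_odd_iff_even.2 hm]
  · rw [(ZMod.natCast_eq_one_iff_odd).2 hm]
    simp [hm]

theorem Nat.gcd_two_eq_ite (m : ℕ) : m.gcd 2 = if 2 ∣ m then 2 else 1 := by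
  split_ifs with h
  · exact Nat.gcd_eq_right h
  · exact Nat.coprime_two_right.2 (Nat.not_even_iff_odd.1 (even_iff_two_dvd.not.2 h))

namespace Subfield

variable {L : Type*} [Field L] (C : Subfield L)

theorem mem_units_toSubmonoid_iff (u : Lˣ) : u ∈ C.toSubmonoid.units ↔ (u : L) ∈ C :=
  ⟨And.left, fun h => ⟨h, by simpa using C.inv_mem h⟩⟩

theorem units_smul_eq_iff {z : Cˣ} {x y : L} (hx : x ≠ 0) :
    z • x = y ↔ ((z : C) : L) = y / x := by
  rw [Units.smul_def, Subfield.smul_def, smul_eq_mul, eq_div_iff hx]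

theorem span_singleton_eq_span_singleton_iff {x y : L} (hx : x ≠ 0) (hy : y ≠ 0) :
    span C {x} = span C {y} ↔ y / x ∈ C := by
  rw [span_singleton_eq_span_singleton]
  constructor
  · rintro ⟨z, hz⟩
    rw [units_smul_eq_iff C hx] at hz
    exact hz ▸ (z : C).2
  · intro h
    refine ⟨Units.mk0 ⟨y / x, h⟩ ?_, (units_smul_eq_iff C hx).2 rfl⟩
    simpa [Subtype.ext_iff] using And.intro hy hx

theorem span_singleton_eq_span_singleton_iff_mk_eq (u v : Lˣ) :
    span C {(u : L)} = span C {(v : L)} ↔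
      (u : Lˣ ⧸ C.toSubmonoid.units) = v := by
  rw [span_singleton_eq_span_singleton_iff C u.ne_zero v.ne_zero, QuotientGroup.eq,
    mem_units_toSubmonoid_iff, Units.val_mul, Units.val_inv_eq_inv_val, inv_mul_eq_div]

theorem span_singleton_eq_span_singleton_inv_iff {x : L} (hx : x ≠ 0) :
    span C {x} = span C {x⁻¹} ↔ x ^ 2 ∈ C := by
  rw [span_singleton_eq_span_singleton_iff C hx (inv_ne_zero hx), inv_div_left, ← sq, inv_mem_iff]

/-- `Lˣ ⧸ Cˣ` parametrises the Desarguesian spread `{C x : x ∈ Lˣ}`. -/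
def spreadLine : Lˣ ⧸ C.toSubmonoid.units → Submodule C L :=
  Quotient.lift (fun u : Lˣ => span C {(u : L)}) fun u v h =>
    (span_singleton_eq_span_singleton_iff_mk_eq C u v).2 (Quotient.sound h)

theorem spreadLine_injective : Function.Injective C.spreadLine := by
  rintro ⟨u⟩ ⟨v⟩ h
  exact (span_singleton_eq_span_singleton_iff_mk_eq C u v).1 h

theorem setOf_span_eq_span_inv_eq_image :
    {S : Submodule C L | ∃ x : L, x ≠ 0 ∧ S = span C {x} ∧ span C {x} = span C {x⁻¹}} =
      C.spreadLine '' {y | y ^ 2 = 1} := by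
  ext S
  constructor
  · rintro ⟨x, hx, rfl, hinv⟩
    refine ⟨Units.mk0 x hx, ?_, rfl⟩
    rw [Set.mem_ofPred_eq, ← QuotientGroup.mk_pow, QuotientGroup.eq_one_iff,
      mem_units_toSubmonoid_iff, Units.val_pow_eq_pow_val, Units.val_mk0]
    exact (span_singleton_eq_span_singleton_inv_iff C hx).1 hinv
  · rintro ⟨y, hy, rfl⟩
    obtain ⟨u, rfl⟩ := QuotientGroup.mk_surjective y
    refine ⟨u, u.ne_zero, rfl, (span_singleton_eq_span_singleton_inv_iff C u.ne_zero).2 ?_⟩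
    rwa [Set.mem_ofPred_eq, ← QuotientGroup.mk_pow, QuotientGroup.eq_one_iff,
      mem_units_toSubmonoid_iff, Units.val_pow_eq_pow_val] at hy

theorem card_units_quotient [Finite L] :
    Nat.card (Lˣ ⧸ C.toSubmonoid.units) = (Nat.card L - 1) / (Nat.card C - 1) := by
  have hC : 0 < Nat.card C - 1 := Nat.sub_pos_of_lt Finite.one_lt_card
  have hunits : Nat.card C.toSubmonoid.units = Nat.card Cˣ :=
    Nat.card_congr C.toSubmonoid.unitsEquivUnitsType.toEquiv
  rw [← Nat.card_units, ← Nat.card_units, ← hunits,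
    Subgroup.card_eq_card_quotient_mul_card_subgroup C.toSubmonoid.units, Nat.mul_div_cancel]
  rwa [hunits, Nat.card_units]

end Subfield

theorem stmt7_general (q n : ℕ) (hneven : Even n)
    (L : Type*) [Field L] [Fintype L] (C : Subfield L)
    (hL : Nat.card L = q ^ n) (hC : Nat.card C = q ^ 2) :
    {S : Submodule C L | ∃ x : L, x ≠ 0 ∧ S = Submodule.span C {x} ∧
        Submodule.span C {x} = Submodule.span C {x⁻¹}}.ncard
      = if Odd q ∧ 4 ∣ n then 2 else 1 := by
  obtain ⟨k, rfl⟩ := hneven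
  have hk : k ≠ 0 := by
    rintro rfl
    exact (Finite.one_lt_card (α := L)).ne' (by rw [hL, pow_zero])
  have hq : 2 ≤ q ^ 2 := hC ▸ Finite.one_lt_card
  have : IsCyclic (Lˣ ⧸ C.toSubmonoid.units) :=
    isCyclic_of_surjective _ (QuotientGroup.mk'_surjective _)
  rw [C.setOf_span_eq_span_inv_eq_image, Set.ncard_image_of_injective _ C.spreadLine_injective,
    IsCyclic.ncard_pow_eq_one (Lˣ ⧸ C.toSubmonoid.units), C.card_units_quotient, hL, hC,
    ← two_mul, pow_mul, ← Nat.geomSum_eq hq, Nat.gcd_two_eq_ite]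
  refine if_congr ?_ rfl rfl
  rw [Nat.two_dvd_geom_sum_iff hk, Nat.odd_pow_iff two_ne_zero]
  exact and_congr_right fun _ => by omega

/-- The number of lines of the Desarguesian spread `D = {Cx : x ∈ L*}` fixed
by the inversion `j` is exactly `2` if `q` is odd and `4 ∣ n`, and exactly `1`
otherwise. -/
theorem stmt7 (q n : ℕ) (hq : IsPrimePow q) (hn : 2 ≤ n) (hneven : Even n)
    (L : Type*) [Field L] [Fintype L] (F C : Subfield L) (hFC : F ≤ C)
    (hL : Nat.card L = q ^ n) (hF : Nat.card F = q) (hC : Nat.card C = q ^ 2) :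
    {S : Submodule C L | ∃ x : L, x ≠ 0 ∧ S = Submodule.span C {x} ∧
        Submodule.span C {x} = Submodule.span C {x⁻¹}}.ncard
      = if Odd q ∧ 4 ∣ n then 2 else 1 :=
  stmt7_general q n hneven L C hL hC
end

section
/- Let L = F_{q^n}, F = F_q, and let a, b ∈ L* span distinct points of PG(n-1,q). The image under the inversion j of the line through Fa and Fb is contained in a line (i.e., a 2-dimensional F-subspace) if and only if ab^{-1} lies in the unique subfield of L of order q² (in particular n must be even). -/
/-!
Write `c = a * b⁻¹`. If the image lies in a plane `W`, the three points `a⁻¹, b⁻¹, (a + b)⁻¹`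
of `W` are dependent, and clearing denominators turns the dependence into a nonzero quadratic
equation for `c` over `F`. Hence `[F(c) : F]` divides `2 = [C : F]`, which in a finite field puts
`c` in `C`. Conversely, if `c ∈ C` then `(t a + u b)⁻¹ = b⁻¹ (t c + u)⁻¹` lies in the plane `b⁻¹ C`.
-/

open Polynomial IntermediateField

theorem Subfield.mem_iff_pow_card_eq_self {L : Type*} [Field L] (K : Subfield L) [Finite K]
    {x : L} : x ∈ K ↔ x ^ Nat.card K = x := by
  have := Fintype.ofFinite K
  have hq : 1 < Nat.card K := Finite.one_lt_card
  have hroots := FiniteField.roots_X_pow_card_sub_X K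
  rw [Fintype.card_eq_nat_card] at hroots
  have hsplits : Splits (X ^ Nat.card K - X : K[X]) := by
    rw [splits_iff_card_roots, hroots, ← Finset.card_def, Finset.card_univ,
      FiniteField.X_pow_card_sub_X_natDegree_eq _ hq, Fintype.card_eq_nat_card]
  have hmem := hroots ▸ hsplits.roots_map K.subtype ▸ Multiset.mem_map (b := x)
  rw [Polynomial.map_sub, Polynomial.map_pow, map_X,
    mem_roots (FiniteField.X_pow_card_sub_X_ne_zero L hq)] at hmem
  simpa [sub_eq_zero, iff_comm] using hmem

section FiniteSubfield

variable {L : Type*} [Field L] [Finite L]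

theorem Subfield.finrank_extendScalars_eq {F C : Subfield L} (hFC : F ≤ C) {m : ℕ}
    (hC : Nat.card C = Nat.card F ^ m) : Module.finrank F (extendScalars hFC) = m := by
  refine Nat.pow_right_injective (Finite.one_lt_card (α := F)) ?_
  show Nat.card F ^ _ = Nat.card F ^ m
  rw [← hC, ← Module.natCard_eq_pow_finrank]
  rfl

theorem Subfield.mem_of_finrank_adjoin_dvd {F C : Subfield L} (hFC : F ≤ C) {x : L}
    (hx : Module.finrank F F⟮x⟯ ∣ Module.finrank F (extendScalars hFC)) : x ∈ C := by
  obtain ⟨k, hk⟩ := hx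
  have hC : Nat.card C = Nat.card F⟮x⟯ ^ k := by
    rw [show Nat.card C = Nat.card (extendScalars hFC) from rfl,
      Module.natCard_eq_pow_finrank (K := F), Module.natCard_eq_pow_finrank (K := F) (V := F⟮x⟯),
      hk, pow_mul]
  have := Fintype.ofFinite F⟮x⟯
  have h := FiniteField.pow_card_pow k (⟨x, mem_adjoin_simple_self F x⟩ : F⟮x⟯)
  rw [Subfield.mem_iff_pow_card_eq_self, hC, ← Fintype.card_eq_nat_card]
  exact congrArg Subtype.val h

theorem finrank_adjoin_dvd_two_of_aeval_eq_zero {F : Subfield L} {x : L} {p : F[X]}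
    (hp0 : p ≠ 0) (hp : p.natDegree ≤ 2) (hx : aeval x p = 0) : Module.finrank F F⟮x⟯ ∣ 2 := by
  have hpos : 0 < Module.finrank F F⟮x⟯ := Module.finrank_pos
  have hle : Module.finrank F F⟮x⟯ ≤ 2 := by
    rw [adjoin.finrank (.of_finite F x)]
    exact (natDegree_le_of_dvd (minpoly.dvd F x hx) hp0).trans hp
  interval_cases Module.finrank F F⟮x⟯ <;> norm_num

end FiniteSubfield

theorem Submodule.exists_ne_zero_relation_of_finrank_eq_two {K V : Type*} [Field K]
    [AddCommGroup V] [Module K V] {W : Submodule K V} (hW : Module.finrank K W = 2)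
    {x y z : V} (hx : x ∈ W) (hy : y ∈ W) (hz : z ∈ W) :
    ∃ g : Fin 3 → K, g ≠ 0 ∧ g 0 • x + g 1 • y + g 2 • z = 0 := by
  have : Module.Finite K W := Module.finite_of_finrank_eq_succ hW
  have hdep : ¬ LinearIndependent K ![(⟨x, hx⟩ : W), ⟨y, hy⟩, ⟨z, hz⟩] := fun h => by
    simpa [hW] using h.fintype_card_le_finrank
  obtain ⟨g, hg, i, hi⟩ := Fintype.not_linearIndependent_iff.mp hdep
  refine ⟨g, fun h => hi (by simp [h]), ?_⟩
  simpa [Fin.sum_univ_three, add_assoc] using congrArg Subtype.val hg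

theorem quadratic_of_inv_relation {L : Type*} [Field L] {a b : L} (ha : a ≠ 0) (hb : b ≠ 0)
    (hab : a + b ≠ 0) {α β γ : L} (h : α * a⁻¹ + β * b⁻¹ + γ * (a + b)⁻¹ = 0) :
    β * (a * b⁻¹) ^ 2 + (α + β + γ) * (a * b⁻¹) + α = 0 := by
  field_simp at h ⊢
  linear_combination h

theorem Submodule.finrank_map_mulLeft {K A : Type*} [Field K] [Ring A] [IsDomain A]
    [Algebra K A] (P : Submodule K A) {c : A} (hc : c ≠ 0) :
    Module.finrank K (P.map (LinearMap.mulLeft K c)) = Module.finrank K P :=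
  (Submodule.equivMapOfInjective _ (mul_right_injective₀ hc) P).finrank_eq.symm

section InverseLine

variable {L : Type*} [Field L] {F C : Subfield L} (hFC : F ≤ C) {a b : L}

theorem mul_inv_mem_of_inv_mem_of_finrank_eq_two [Finite L]
    (hC : Module.finrank F (Subfield.extendScalars hFC) = 2) (ha : a ≠ 0) (hb : b ≠ 0)
    (hab : a + b ≠ 0)
    {W : Submodule F L} (hW : Module.finrank F W = 2)
    (ha' : a⁻¹ ∈ W) (hb' : b⁻¹ ∈ W) (hab' : (a + b)⁻¹ ∈ W) : a * b⁻¹ ∈ C := by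
  obtain ⟨g, hg, hrel⟩ := W.exists_ne_zero_relation_of_finrank_eq_two hW ha' hb' hab'
  set p : F[X] := Polynomial.C (g 1) * X ^ 2 + Polynomial.C (g 0 + g 1 + g 2) * X +
    Polynomial.C (g 0)
  have hp0 : p ≠ 0 := by
    intro hp
    have h0 : g 0 = 0 := by simpa [p] using congrArg (coeff · 0) hp
    have h1 : g 1 = 0 := by simpa [p] using congrArg (coeff · 2) hp
    have h2 : g 2 = 0 := by simpa [p, h0, h1] using congrArg (coeff · 1) hp
    exact hg (funext fun i => by fin_cases i <;> assumption)
  have hroot : aeval (a * b⁻¹) p = 0 := by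
    simp only [p, map_add, map_mul, map_pow, aeval_C, aeval_X]
    exact quadratic_of_inv_relation ha hb hab hrel
  exact Subfield.mem_of_finrank_adjoin_dvd hFC <|
    hC ▸ finrank_adjoin_dvd_two_of_aeval_eq_zero hp0 natDegree_quadratic_le hroot

theorem inv_mem_map_mulLeft_of_mul_inv_mem (hb : b ≠ 0) (hc : a * b⁻¹ ∈ C) (t u : F) :
    ((t : L) * a + u * b)⁻¹ ∈
      (Subfield.extendScalars hFC).toSubalgebra.toSubmodule.map (LinearMap.mulLeft F b⁻¹) := by
  have hmem : (t : L) * (a * b⁻¹) + u ∈ C := C.add_mem (C.mul_mem (hFC t.2) hc) (hFC u.2)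
  refine ⟨_, C.inv_mem hmem, ?_⟩
  simp only [LinearMap.mulLeft_apply]
  rw [← mul_inv]
  congr 1
  field_simp

end InverseLine

theorem stmt8_general (q : ℕ)
    (L : Type*) [Field L] [Fintype L] (F C : Subfield L) (hFC : F ≤ C)
    (hF : Nat.card F = q) (hC : Nat.card C = q ^ 2)
    (a b : L) (ha : a ≠ 0) (hb : b ≠ 0)
    (hab : Submodule.span F {a} ≠ Submodule.span F {b}) :
    (∃ W : Submodule F L, Module.finrank F W = 2 ∧
        ∀ t u : F, ¬(t = 0 ∧ u = 0) → ((t : L) * a + (u : L) * b)⁻¹ ∈ W)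
      ↔ a * b⁻¹ ∈ C := by
  subst hF
  have hC2 := Subfield.finrank_extendScalars_eq hFC hC
  constructor
  · rintro ⟨W, hW, hinv⟩
    have hab0 : a + b ≠ 0 := fun h => hab <| by
      rw [eq_neg_of_add_eq_zero_right h, ← Set.neg_singleton, Submodule.span_neg]
    exact mul_inv_mem_of_inv_mem_of_finrank_eq_two hFC hC2 ha hb hab0 hW
      (by simpa using hinv 1 0 (by simp)) (by simpa using hinv 0 1 (by simp))
      (by simpa using hinv 1 1 (by simp))
  · intro hc
    exact ⟨_, (Submodule.finrank_map_mulLeft _ (inv_ne_zero hb)).trans hC2,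
      fun t u _ => inv_mem_map_mulLeft_of_mul_inv_mem hFC hb hc t u⟩

/-- Let `Fa ≠ Fb` be distinct points of `PG(n-1, q)`.  The image under the
inversion `j` of the line through `Fa` and `Fb` is contained in a line (a
2-dimensional `F`-subspace) if and only if `ab⁻¹` lies in the unique subfield
`C` of `L` of order `q²` (in particular `n` must be even). -/
theorem stmt8 (q n : ℕ) (hq : IsPrimePow q) (hn : 2 ≤ n) (hneven : Even n)
    (L : Type*) [Field L] [Fintype L] (F C : Subfield L) (hFC : F ≤ C)
    (hL : Nat.card L = q ^ n) (hF : Nat.card F = q) (hC : Nat.card C = q ^ 2)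
    (a b : L) (ha : a ≠ 0) (hb : b ≠ 0)
    (hab : Submodule.span F {a} ≠ Submodule.span F {b}) :
    (∃ W : Submodule F L, Module.finrank F W = 2 ∧
        ∀ t u : F, ¬(t = 0 ∧ u = 0) → ((t : L) * a + (u : L) * b)⁻¹ ∈ W)
      ↔ a * b⁻¹ ∈ C :=
  stmt8_general q L F C hFC hF hC a b ha hb hab
end

section
/- With L = F_{q^{2n}}, M = F_{q^n}, F = F_q, i ∈ L \ M, and S_a, S_∞ as above: if a, a' ∈ M ∪ {∞} with a ≠ a', then S_a ∩ S_{a'} = ∅, i.e., no point Fz lies in both. -/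
/-- The subspaces `S_a`, `a ∈ M ∪ {∞}`, are pairwise disjoint as point sets:
no point `Fz` of `PG(2n-1, q)` lies in two of them.  The first conjunct treats
`S_a` versus `S_∞`, the second `S_a` versus `S_{a'}` for `a ≠ a'` in `M`. -/
theorem stmt10 (q n : ℕ) (hq : IsPrimePow q) (hn : 2 ≤ n)
    (L : Type*) [Field L] [Fintype L] (F M : Subfield L) (hFM : F ≤ M)
    (hL : Nat.card L = q ^ (2 * n)) (hF : Nat.card F = q) (hM : Nat.card M = q ^ n)
    (i : L) (hi : i ∉ M) :
    (∀ a ∈ M, ∀ c c' : L, c ∈ M → c ≠ 0 → c' ∈ M → c' ≠ 0 →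
        Submodule.span F {c * (a + i)} ≠ Submodule.span F {c'}) ∧
    (∀ a ∈ M, ∀ a' ∈ M, a ≠ a' → ∀ c c' : L, c ∈ M → c ≠ 0 → c' ∈ M → c' ≠ 0 →
        Submodule.span F {c * (a + i)} ≠ Submodule.span F {c' * (a' + i)}) := by
  have key : ∀ x y : L, Submodule.span F {x} = Submodule.span F {y} →
      ∃ f : F, (f : L) * y = x := by
    intro x y h
    have hx : x ∈ Submodule.span F {y} := h ▸ Submodule.mem_span_singleton_self x
    obtain ⟨f, hf⟩ := Submodule.mem_span_singleton.mp hx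
    exact ⟨f, hf⟩
  constructor
  · intro a ha c c' hc hc0 hc' hc'0 h
    obtain ⟨f, hf⟩ := key _ _ h
    apply hi
    have hfM : (f : L) ∈ M := hFM f.2
    have : i = c⁻¹ * ((f : L) * c') - a := by field_simp; linear_combination -hf
    rw [this]
    exact M.sub_mem (M.mul_mem (M.inv_mem hc) (M.mul_mem hfM hc')) ha
  · intro a ha a' ha' hne c c' hc hc0 hc' hc'0 h
    obtain ⟨f, hf⟩ := key _ _ h
    have hfM : (f : L) ∈ M := hFM f.2
    by_cases hcc : c - (f : L) * c' = 0
    · apply hne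
      have hceq : c = (f : L) * c' := by linear_combination hcc
      have : c * a = c * a' := by linear_combination -hf - (a' + i) * hcc
      exact mul_left_cancel₀ hc0 this
    · apply hi
      have : i = (c - (f : L) * c')⁻¹ * ((f : L) * c' * a' - c * a) := by
        field_simp
        linear_combination -hf
      rw [this]
      exact M.mul_mem (M.inv_mem (M.sub_mem hc (M.mul_mem hfM hc')))
        (M.sub_mem (M.mul_mem (M.mul_mem hfM hc') ha') (M.mul_mem hc ha))
end

section
/- Let L = F_{q^{2n}}, M = F_{q^n}, F = F_q, i ∈ L \ M, and a, b ∈ M*. Let S_a = {F(c(a+i)) : c ∈ M*} and S_b^φ = {F(d^q b^q + d i) : d ∈ M*}. Then S_a ∩ S_b^φ contains at most one point; equivalently, if c(a+i) and d^q b^q + d i span the same F-line and c'(a+i) and (d')^q b^q + d' i span the same F-line, then F(c(a+i)) = F(c'(a+i)). -/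
/-!
If `F(c(a+i)) = F(d^q b^q + di)`, comparing `M`-coordinates in the basis `1, i` gives `λc = d` and
`λca = d^q b^q` for some `λ ∈ F*`, so `d a = d^q b^q`. For two solutions `d, d'` of this equation
`(d/d')^q = d/d'`, and the roots of `X^q - X` in `L` are exactly the elements of `F`; hence `d/d'`,
and with it `c/c'`, lies in `F*`.
-/

open Polynomial

theorem Subfield.mem_of_pow_card_eq_self {L : Type*} [Field L] (F : Subfield L) [Finite F]
    {x : L} (hx : x ^ Nat.card F = x) : x ∈ F := by
  have := Fintype.ofFinite F
  have hq : 1 < Fintype.card F := Fintype.one_lt_card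
  have hsplits : Splits (X ^ Fintype.card F - X : F[X]) := by
    rw [splits_iff_card_roots, FiniteField.roots_X_pow_card_sub_X, ← Finset.card_def,
      Finset.card_univ, FiniteField.X_pow_card_sub_X_natDegree_eq _ hq]
  have hroot : x ∈ ((X ^ Fintype.card F - X : F[X]).map F.subtype).roots := by
    rw [mem_roots (map_ne_zero (FiniteField.X_pow_card_sub_X_ne_zero _ hq))]
    simp [← Nat.card_eq_fintype_card, hx]
  rw [hsplits.roots_map, FiniteField.roots_X_pow_card_sub_X] at hroot
  obtain ⟨y, -, rfl⟩ := Multiset.mem_map.mp hroot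
  exact y.2

section

variable {L : Type*} [Field L] {F M : Subfield L} {i : L}

theorem Subfield.eq_and_eq_of_add_mul_eq_add_mul (hi : i ∉ M) {x y x' y' : L} (hx : x ∈ M)
    (hy : y ∈ M) (hx' : x' ∈ M) (hy' : y' ∈ M) (h : x + y * i = x' + y' * i) :
    x = x' ∧ y = y' := by
  obtain rfl | hyy := eq_or_ne y y'
  · exact ⟨add_right_cancel h, rfl⟩
  · have hi' : i = (x' - x) / (y - y') := by
      rw [eq_div_iff (sub_ne_zero.mpr hyy)]; linear_combination h
    exact absurd (hi' ▸ M.div_mem (M.sub_mem hx' hx) (M.sub_mem hy hy')) hi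

theorem Subfield.exists_mem_mul_eq_of_mem_span (hFM : F ≤ M) (hi : i ∉ M) {x y x' y' : L}
    (hx : x ∈ M) (hy : y ∈ M) (hx' : x' ∈ M) (hy' : y' ∈ M)
    (h : x' + y' * i ∈ Submodule.span F {x + y * i}) :
    ∃ t ∈ F, t * x = x' ∧ t * y = y' := by
  obtain ⟨t, ht⟩ := Submodule.mem_span_singleton.mp h
  have htM := hFM t.2
  refine ⟨t, t.2, M.eq_and_eq_of_add_mul_eq_add_mul hi (M.mul_mem htM hx) (M.mul_mem htM hy)
    hx' hy' ?_⟩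
  rw [← ht, Subfield.smul_def, smul_eq_mul]
  ring

theorem Subfield.exists_mem_mul_eq_of_span_mul_add_eq (hFM : F ≤ M) (hi : i ∉ M) {a c d e : L}
    (haM : a ∈ M) (hcM : c ∈ M) (hdM : d ∈ M) (heM : e ∈ M)
    (h : Submodule.span F {c * (a + i)} = Submodule.span F {e + d * i}) :
    ∃ t ∈ F, t * c = d ∧ d * a = e := by
  have hmem : e + d * i ∈ Submodule.span F {c * a + c * i} := by
    rw [← mul_add, h]; exact Submodule.mem_span_singleton_self _
  obtain ⟨t, htF, hta, htc⟩ :=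
    Subfield.exists_mem_mul_eq_of_mem_span hFM hi (M.mul_mem hcM haM) hcM heM hdM hmem
  exact ⟨t, htF, htc, by rw [← hta, ← htc, mul_assoc]⟩

end

theorem Subfield.div_mem_of_mul_eq_pow_mul_pow {L : Type*} [Field L] (F : Subfield L) [Finite F]
    {a b d d' : L} (hb : b ≠ 0) (hd' : d' ≠ 0) (h : d * a = d ^ Nat.card F * b ^ Nat.card F)
    (h' : d' * a = d' ^ Nat.card F * b ^ Nat.card F) : d / d' ∈ F := by
  set q := Nat.card F
  have hrel : d' * d ^ q = d * d' ^ q := by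
    apply mul_right_cancel₀ (pow_ne_zero q hb)
    linear_combination d' * h.symm - d * h'.symm
  apply F.mem_of_pow_card_eq_self
  rw [div_pow, div_eq_div_iff (pow_ne_zero q hd') hd']
  linear_combination hrel

theorem stmt13_general (q : ℕ)
    (L : Type*) [Field L] [Fintype L] (F M : Subfield L) (hFM : F ≤ M)
    (hF : Nat.card F = q)
    (i : L) (hi : i ∉ M)
    (a b : L) (haM : a ∈ M) (hbM : b ∈ M) (hb : b ≠ 0) :
    ∀ c c' d d' : L, c ∈ M → c ≠ 0 → c' ∈ M → c' ≠ 0 →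
      d ∈ M → d ≠ 0 → d' ∈ M → d' ≠ 0 →
      Submodule.span F {c * (a + i)} = Submodule.span F {d ^ q * b ^ q + d * i} →
      Submodule.span F {c' * (a + i)} = Submodule.span F {d' ^ q * b ^ q + d' * i} →
      Submodule.span F {c * (a + i)} = Submodule.span F {c' * (a + i)} := by
  intro c c' d d' hcM _ hc'M _ hdM hd hd'M hd' h h'
  subst hF
  have hpow_mem : ∀ {d}, d ∈ M → d ^ Nat.card F * b ^ Nat.card F ∈ M := fun hdM ↦
    M.mul_mem (M.pow_mem hdM _) (M.pow_mem hbM _)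
  obtain ⟨t, htF, htc, hda⟩ :=
    Subfield.exists_mem_mul_eq_of_span_mul_add_eq hFM hi haM hcM hdM (hpow_mem hdM) h
  obtain ⟨t', ht'F, ht'c', hda'⟩ :=
    Subfield.exists_mem_mul_eq_of_span_mul_add_eq hFM hi haM hc'M hd'M (hpow_mem hd'M) h'
  have ht : t ≠ 0 := left_ne_zero_of_mul (htc ▸ hd)
  have ht' : t' ≠ 0 := left_ne_zero_of_mul (ht'c' ▸ hd')
  have huF : t' * (d / d') / t ∈ F :=
    F.div_mem (F.mul_mem ht'F (F.div_mem_of_mul_eq_pow_mul_pow hb hd' hda hda')) htF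
  have hu : (⟨_, huF⟩ : F) ≠ 0 := by simp [Subtype.ext_iff, ht, ht', hd, hd']
  rw [← Submodule.span_singleton_smul_eq hu.isUnit (c' * (a + i))]
  congr 2
  change _ = t' * (d / d') / t * _
  rw [← htc, ← ht'c']
  field_simp

/-- For `a, b ∈ M*`, the intersection `S_a ∩ S_b^φ` contains at most one
point: if `F(c(a+i)) = F(d^q b^q + di)` and `F(c'(a+i)) = F(d'^q b^q + d'i)`
with `c, c', d, d' ∈ M*`, then `F(c(a+i)) = F(c'(a+i))`. -/
theorem stmt13 (q n : ℕ) (hq : IsPrimePow q) (hn : 2 ≤ n)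
    (L : Type*) [Field L] [Fintype L] (F M : Subfield L) (hFM : F ≤ M)
    (hL : Nat.card L = q ^ (2 * n)) (hF : Nat.card F = q) (hM : Nat.card M = q ^ n)
    (i : L) (hi : i ∉ M)
    (a b : L) (haM : a ∈ M) (hbM : b ∈ M) (ha : a ≠ 0) (hb : b ≠ 0) :
    ∀ c c' d d' : L, c ∈ M → c ≠ 0 → c' ∈ M → c' ≠ 0 →
      d ∈ M → d ≠ 0 → d' ∈ M → d' ≠ 0 →
      Submodule.span F {c * (a + i)} = Submodule.span F {d ^ q * b ^ q + d * i} →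
      Submodule.span F {c' * (a + i)} = Submodule.span F {d' ^ q * b ^ q + d' * i} →
      Submodule.span F {c * (a + i)} = Submodule.span F {c' * (a + i)} :=
  stmt13_general q L F M hFM hF i hi a b haM hbM hb
end

section
/- Let r ≥ 1 and q < r. Then the image C of the r-uple embedding of PG(1,q) in PG(r,q), C = {F(t₀^r, t₀^{r-1}t₁, …, t₁^r)}, spans a subspace of projective dimension exactly q; i.e., the F-span of the vectors (t₀^r, …, t₁^r) has dimension q+1. -/
/-- For `q < r`, the image of the `r`-uple embedding of `PG(1, q)` in
`PG(r, q)` spans a subspace of projective dimension exactly `q`: the `F`-span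
of the vectors `(t₀^r, t₀^{r-1}t₁, …, t₁^r)` has dimension `q + 1`. -/
theorem stmt18 (q r : ℕ) (hq : IsPrimePow q) (hr : 1 ≤ r) (hqr : q < r)
    (F : Type*) [Field F] [Fintype F] (hF : Fintype.card F = q)
    (v : F → F → (Fin (r + 1) → F))
    (hv : ∀ t₀ t₁ : F, ∀ j : Fin (r + 1), v t₀ t₁ j = t₀ ^ (r - (j : ℕ)) * t₁ ^ (j : ℕ)) :
    Module.finrank F
      (Submodule.span F {w | ∃ t₀ t₁ : F, ¬(t₀ = 0 ∧ t₁ = 0) ∧ w = v t₀ t₁})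
      = q + 1 := by
  classical
  set u : Option F → (Fin (r + 1) → F) := fun i => match i with
    | none => v 0 1
    | some s => v 1 s with hu
  have hjle : ∀ j : Fin (r + 1), (j : ℕ) ≤ r := fun j => Nat.lt_succ_iff.mp j.isLt
  -- span equality
  have hspan : Submodule.span F {w | ∃ t₀ t₁ : F, ¬(t₀ = 0 ∧ t₁ = 0) ∧ w = v t₀ t₁}
      = Submodule.span F (Set.range u) := by
    apply le_antisymm
    · rw [Submodule.span_le]
      rintro w ⟨t₀, t₁, hne, rfl⟩
      by_cases h0 : t₀ = 0
      · have ht1 : t₁ ≠ 0 := fun h => hne ⟨h0, h⟩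
        have : v t₀ t₁ = t₁ ^ r • u none := by
          funext j
          simp only [hu, Pi.smul_apply, smul_eq_mul, hv, h0, one_pow, mul_one]
          rcases eq_or_lt_of_le (hjle j) with hj | hj
          · rw [hj, Nat.sub_self, pow_zero, one_mul, mul_one]
          · rw [zero_pow (Nat.sub_ne_zero_of_lt hj), mul_zero, zero_mul]
        rw [this]
        exact Submodule.smul_mem _ _ (Submodule.subset_span ⟨none, rfl⟩)
      · have : v t₀ t₁ = t₀ ^ r • u (some (t₁ * t₀⁻¹)) := by
          funext j
          simp only [hu, Pi.smul_apply, smul_eq_mul, hv, one_pow, one_mul, mul_pow]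
          rw [← mul_assoc, mul_comm (t₀ ^ r) (t₁ ^ (j:ℕ)), mul_assoc, inv_pow,
            ← pow_sub₀ _ h0 (hjle j), mul_comm]
        rw [this]
        exact Submodule.smul_mem _ _ (Submodule.subset_span ⟨some _, rfl⟩)
    · rw [Submodule.span_le]
      rintro w ⟨i, rfl⟩
      match i with
      | none => exact Submodule.subset_span ⟨0, 1, fun h => one_ne_zero h.2, rfl⟩
      | some s => exact Submodule.subset_span ⟨1, s, fun h => one_ne_zero h.1, rfl⟩
  rw [hspan]
  -- linear independence
  have e : Fin q ≃ F := (Fintype.equivFinOfCardEq hF).symm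
  have hind : LinearIndependent F u := by
    rw [Fintype.linearIndependent_iff]
    intro g hg i
    have hcoord : ∀ j : Fin (r + 1), (∑ i, g i • u i) j = 0 := fun j => by rw [hg]; rfl
    have hsmall : ∀ j : Fin q, ∑ k : Fin q, g (some (e k)) * (e k) ^ (j : ℕ) = 0 := by
      intro j
      have hjr : (j : ℕ) < r := lt_trans j.isLt hqr
      have := hcoord ⟨(j : ℕ), lt_trans hjr (Nat.lt_succ_self r)⟩
      rw [Finset.sum_apply, Fintype.sum_option] at this
      simp only [hu, Pi.smul_apply, smul_eq_mul, hv] at this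
      rw [zero_pow (Nat.sub_ne_zero_of_lt hjr)] at this
      simp only [zero_mul, mul_zero, zero_add, one_pow, one_mul] at this
      rw [Equiv.sum_comp e (fun s => g (some s) * s ^ (j : ℕ))]
      simpa using this
    have hgs : ∀ s : F, g (some s) = 0 := by
      have := Matrix.eq_zero_of_forall_pow_sum_mul_pow_eq_zero
        (f := fun k : Fin q => e k) (v := fun k : Fin q => g (some (e k)))
        (fun a b hab => e.injective hab) hsmall
      intro s
      have := congrFun this (e.symm s)
      simpa using this
    have hgnone : g none = 0 := by
      have := hcoord ⟨r, Nat.lt_succ_self r⟩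
      rw [Finset.sum_apply, Fintype.sum_option] at this
      simp only [hu, Pi.smul_apply, smul_eq_mul, hv, hgs, zero_mul, Finset.sum_const_zero,
        add_zero, Nat.sub_self, pow_zero, one_mul, one_pow, mul_one] at this
      exact this
    match i with
    | none => exact hgnone
    | some s => exact hgs s
  rw [finrank_span_eq_card hind, Fintype.card_option, hF]
end
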